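/- arXiv:2011.05313 — 2 statements merged into one kernel-verified Lean document; each statement's English description precedes it below -/
import Mathlib

section
/- Let w : ℝ → ℂ be integrable. Define the autocorrelation ŵ(τ) = ∫_ℝ w(t) · conj(w(t − τ)) dt and the Fourier transform W(f) = ∫_ℝ w(t) e^{−2πi f t} dt. Then for every f ∈ ℝ, the energy spectral density of w equals the Fourier transform of its autocorrelation: |W(f)|² = ∫_ℝ ŵ(τ) e^{−2πi f τ} dτ. -/
/-!
The autocorrelation of `w` is the convolution of `w` with its conjugate reflection
`t ↦ conj (w (-t))`, whose Fourier transform is `conj Ŵ`. The convolution theorem then gives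
`𝓕 ŵ = Ŵ · conj Ŵ = |Ŵ|²`.
-/

open MeasureTheory Real ComplexConjugate

/-- The autocorrelation `ŵ(τ) = ∫ w(t) conj(w(t − τ)) dt` of a window function. -/
noncomputable def autocorrW (w : ℝ → ℂ) (τ : ℝ) : ℂ :=
  ∫ t : ℝ, w t * conj (w (t - τ))

/-- The Fourier transform `ĝ(f) = ∫ g(t) e^{−2πi f t} dt`. -/
noncomputable def fourierT (g : ℝ → ℂ) (f : ℝ) : ℂ :=
  ∫ t : ℝ, g t * Complex.exp (-2 * (π : ℂ) * Complex.I * f * t)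

open FourierTransform Convolution

section
variable {V : Type*} [NormedAddCommGroup V] [InnerProductSpace ℝ V] [MeasurableSpace V]
  [BorelSpace V] [FiniteDimensional ℝ V]

theorem MeasureTheory.Integrable.conj_comp_neg {f : V → ℂ} (hf : Integrable f) :
    Integrable (fun v ↦ conj (f (-v))) := by
  simpa using Complex.conjCLE.toContinuousLinearMap.integrable_comp hf.comp_neg

theorem Real.fourier_conj_comp_neg (f : V → ℂ) (ξ : V) :
    𝓕 (fun v ↦ conj (f (-v))) ξ = conj (𝓕 f ξ) := by
  simp_rw [Real.fourier_eq, ← integral_conj]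
  rw [← integral_neg_eq_self]
  congr 1 with v
  simp [Circle.smul_def, ← Circle.coe_inv_eq_conj, ← AddChar.map_neg_eq_inv, inner_neg_left]

end

theorem fourierT_eq_fourier (g : ℝ → ℂ) (f : ℝ) : fourierT g f = 𝓕 g f := by
  rw [Real.fourier_real_eq_integral_exp_smul, fourierT]
  congr 1 with t
  rw [smul_eq_mul, mul_comm]
  push_cast
  ring_nf

theorem autocorrW_eq_convolution (w : ℝ → ℂ) :
    autocorrW w = w ⋆[ContinuousLinearMap.mul ℂ ℂ] fun t ↦ conj (w (-t)) := by
  ext τ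
  simp [autocorrW, convolution_def]

/-- The energy spectral density of an integrable window equals the Fourier transform
of its autocorrelation. -/
theorem esd_eq_fourier_autocorr (w : ℝ → ℂ) (hw : Integrable w) (f : ℝ) :
    ((‖fourierT w f‖ : ℝ) : ℂ) ^ 2 = fourierT (autocorrW w) f := by
  rw [← Complex.mul_conj', fourierT_eq_fourier, fourierT_eq_fourier, autocorrW_eq_convolution,
    Real.fourier_mul_convolution_eq hw hw.conj_comp_neg, Real.fourier_conj_comp_neg]
end

section
/- Let (Ω, P) be a probability space and x : ℝ × Ω → ℂ jointly measurable with |x(t, ω)| ≤ M almost surely for all t, second-order stationary with autocorrelation x̂(τ) = E[x(t, ·) · conj(x(t − τ, ·))]. Suppose the power spectral density S : ℝ → ℂ is integrable and satisfies the Fourier inversion relation x̂(τ) = ∫_ℝ S(f) e^{2πi f τ} df for all τ. Let w : ℝ → ℂ be integrable with |w| also square-integrable, W(f) = ∫_ℝ w(t) e^{−2πi f t} dt, and y(t, ω) = w(t) · x(t, ω) with Y(f, ω) = ∫_ℝ y(t, ω) e^{−2πi f t} dt. Then for every f ∈ ℝ, E[|Y(f, ·)|²] = ∫_ℝ S(f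 − f′) · |W(f′)|² df′; that is, the expected energy spectral density of the windowed random signal is the convolution of the power spectral density S of the signal with the energy spectral density |W|² of the window. -/
open MeasureTheory Real ComplexConjugate

/-! Write `|Y(f)|² = Y(f) · conj Y(f)` as a double integral over `(t, s)`. Since `x` is bounded and
`w` integrable, Fubini moves the expectation inside, onto `x(t) · conj x(s)`, which by stationarity
and the inversion formula is `∫ S(ν) e^{2πiν(t-s)} dν`. A second Fubini, now using integrability of
`S`, factors the `(t, s)`-integral as `|∫ w(t) e^{-2πi(f-ν)t} dt|² = |W(f - ν)|²`, and the
substitution `f' = f - ν` gives the convolution. The almost sure bound becomes a pointwise one after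
zeroing `x` on the exceptional set, which is null in almost every `ω`-section as well. -/

section SecondMoment

variable {α Ω : Type*} [MeasurableSpace α] [MeasurableSpace Ω] {μ : Measure α} {P : Measure Ω}

lemma integral_mul_conj_integral [SFinite μ] (g : α → ℂ) :
    (∫ a, g a ∂μ) * conj (∫ a, g a ∂μ) = ∫ p, g p.1 * conj (g p.2) ∂μ.prod μ := by
  rw [← integral_conj, ← integral_prod_mul]

lemma integral_norm_integral_sq_eq_integral_covariance_of_forall_norm_le
    [SFinite μ] [IsFiniteMeasure P] {x : α × Ω → ℂ} (hx : Measurable x) {M : ℝ}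
    (hM : ∀ p, ‖x p‖ ≤ M) {φ : α → ℂ} (hφ : Integrable φ μ) :
    ((∫ ω, ‖∫ t, φ t * x (t, ω) ∂μ‖ ^ 2 ∂P : ℝ) : ℂ)
      = ∫ p, φ p.1 * conj (φ p.2) * ∫ ω, x (p.1, ω) * conj (x (p.2, ω)) ∂P ∂μ.prod μ := by
  have hint : Integrable (Function.uncurry fun ω (p : α × α) =>
      φ p.1 * x (p.1, ω) * conj (φ p.2 * x (p.2, ω))) (P.prod (μ.prod μ)) := by
    refine ((((hφ.norm.mul_prod hφ.norm).comp_snd P).mul_const (M * M))).mono' ?_ ?_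
    · have hφ' := hφ.aestronglyMeasurable
      refine ((hφ'.comp_fst.comp_snd).mul ?_).mul
        (Complex.continuous_conj.comp_aestronglyMeasurable ((hφ'.comp_snd.comp_snd).mul ?_))
      · exact (hx.comp (measurable_snd.fst.prodMk measurable_fst)).aestronglyMeasurable
      · exact (hx.comp (measurable_snd.snd.prodMk measurable_fst)).aestronglyMeasurable
    · refine .of_forall fun q => ?_
      simp only [Function.uncurry, norm_mul, RCLike.norm_conj]
      have hxx := mul_le_mul (hM (q.2.1, q.1)) (hM (q.2.2, q.1)) (norm_nonneg _)
        ((norm_nonneg _).trans (hM (q.2.1, q.1)))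
      calc _ = ‖φ q.2.1‖ * ‖φ q.2.2‖ * (‖x (q.2.1, q.1)‖ * ‖x (q.2.2, q.1)‖) := by ring
        _ ≤ _ := by gcongr
  calc ((∫ ω, ‖∫ t, φ t * x (t, ω) ∂μ‖ ^ 2 ∂P : ℝ) : ℂ)
      = ∫ ω, (∫ t, φ t * x (t, ω) ∂μ) * conj (∫ t, φ t * x (t, ω) ∂μ) ∂P := by
        rw [← integral_complex_ofReal]
        simp_rw [Complex.mul_conj', Complex.ofReal_pow]
    _ = ∫ ω, ∫ p, φ p.1 * x (p.1, ω) * conj (φ p.2 * x (p.2, ω)) ∂μ.prod μ ∂P := by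
        simp_rw [integral_mul_conj_integral]
    _ = ∫ p, ∫ ω, φ p.1 * x (p.1, ω) * conj (φ p.2 * x (p.2, ω)) ∂P ∂μ.prod μ :=
        integral_integral_swap hint
    _ = _ := by
        congr 1 with p
        rw [← integral_const_mul]
        congr 1 with ω
        simp only [map_mul]; ring

theorem integral_norm_integral_sq_eq_integral_covariance [SFinite μ] [IsFiniteMeasure P]
    {x : α × Ω → ℂ} (hx : Measurable x) {M : ℝ} (hM : ∀ t, ∀ᵐ ω ∂P, ‖x (t, ω)‖ ≤ M)
    {φ : α → ℂ} (hφ : Integrable φ μ) :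
    ((∫ ω, ‖∫ t, φ t * x (t, ω) ∂μ‖ ^ 2 ∂P : ℝ) : ℂ)
      = ∫ p, φ p.1 * conj (φ p.2) * ∫ ω, x (p.1, ω) * conj (x (p.2, ω)) ∂P ∂μ.prod μ := by
  set s := {p : α × Ω | ‖x p‖ ≤ M}
  set y := s.indicator x
  have hy : Measurable y := hx.indicator (measurableSet_le hx.norm measurable_const)
  have hyM (p : α × Ω) : ‖y p‖ ≤ max M 0 := by
    by_cases hp : p ∈ s
    · exact (norm_indicator_le_norm_self x p).trans (le_max_of_le_left hp)
    · simp [y, Set.indicator_of_notMem hp]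
  have hyx (t : α) : ∀ᵐ ω ∂P, y (t, ω) = x (t, ω) :=
    (hM t).mono fun ω h => Set.indicator_of_mem (s := s) h x
  have hyx' : ∀ᵐ ω ∂P, ∀ᵐ t ∂μ, y (t, ω) = x (t, ω) :=
    (Measure.ae_ae_comm (p := fun t ω => y (t, ω) = x (t, ω)) (measurableSet_eq_fun hy hx)).1
      (ae_of_all μ hyx)
  have hlhs : ∫ ω, ‖∫ t, φ t * x (t, ω) ∂μ‖ ^ 2 ∂P = ∫ ω, ‖∫ t, φ t * y (t, ω) ∂μ‖ ^ 2 ∂P :=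
    integral_congr_ae <| hyx'.mono fun ω hω =>
      congrArg (‖·‖ ^ 2) (integral_congr_ae (hω.mono fun t ht => by simp only [ht]))
  rw [hlhs, integral_norm_integral_sq_eq_integral_covariance_of_forall_norm_le hy hyM hφ]
  congr 1 with p
  refine congrArg _ (integral_congr_ae ?_)
  filter_upwards [hyx p.1, hyx p.2] with ω h1 h2
  rw [h1, h2]

end SecondMoment

lemma exp_two_pi_I_mul_sub (ν t s : ℝ) :
    Complex.exp (2 * (π : ℂ) * Complex.I * ν * ((t - s : ℝ) : ℂ))
      = Complex.exp (2 * (π : ℂ) * Complex.I * ν * t)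
        * conj (Complex.exp (2 * (π : ℂ) * Complex.I * ν * s)) := by
  rw [← Complex.exp_conj, ← Complex.exp_add]
  simp only [map_mul, Complex.conj_ofReal, Complex.conj_I, map_ofNat, Complex.ofReal_sub]
  ring_nf

theorem integral_mul_conj_mul_integral_exp_sub {φ S : ℝ → ℂ} (hφ : Integrable φ)
    (hS : Integrable S) :
    ∫ p : ℝ × ℝ, φ p.1 * conj (φ p.2) *
        ∫ ν : ℝ, S ν * Complex.exp (2 * (π : ℂ) * Complex.I * ν * ((p.1 - p.2 : ℝ) : ℂ))
      = ∫ ν : ℝ, S ν *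
          ((‖∫ t : ℝ, φ t * Complex.exp (2 * (π : ℂ) * Complex.I * ν * t)‖ ^ 2 : ℝ) : ℂ) := by
  have hint : Integrable (Function.uncurry fun (p : ℝ × ℝ) (ν : ℝ) => φ p.1 * conj (φ p.2) *
      (S ν * Complex.exp (2 * (π : ℂ) * Complex.I * ν * ((p.1 - p.2 : ℝ) : ℂ))))
      (volume.prod volume) := by
    refine ((hφ.norm.mul_prod hφ.norm).mul_prod (ν := volume) hS.norm).mono' ?_
      (.of_forall fun q => ?_)
    · have hφ' := hφ.aestronglyMeasurable
      refine ((hφ'.comp_fst.comp_fst).mul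
        (Complex.continuous_conj.comp_aestronglyMeasurable hφ'.comp_snd.comp_fst)).mul
        (hS.aestronglyMeasurable.comp_snd.mul (Continuous.aestronglyMeasurable ?_))
      fun_prop
    · simp [Function.uncurry, Complex.norm_exp]
  calc _ = ∫ p : ℝ × ℝ, ∫ ν : ℝ, φ p.1 * conj (φ p.2) *
        (S ν * Complex.exp (2 * (π : ℂ) * Complex.I * ν * ((p.1 - p.2 : ℝ) : ℂ))) := by
        simp_rw [integral_const_mul]
    _ = ∫ ν : ℝ, ∫ p : ℝ × ℝ, φ p.1 * conj (φ p.2) *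
        (S ν * Complex.exp (2 * (π : ℂ) * Complex.I * ν * ((p.1 - p.2 : ℝ) : ℂ))) :=
        integral_integral_swap hint
    _ = _ := by
        congr 1 with ν
        rw [Complex.ofReal_pow, ← Complex.mul_conj', integral_mul_conj_integral,
          ← integral_const_mul]
        congr 1 with p
        simp only [exp_two_pi_I_mul_sub, map_mul]
        ring

theorem expected_esd_eq_psd_conv_window_esd_general
    {Ω : Type*} [MeasureSpace Ω] [IsProbabilityMeasure (volume : Measure Ω)]
    (x : ℝ × Ω → ℂ) (M : ℝ) (hxmeas : Measurable x)
    (hbd : ∀ t : ℝ, ∀ᵐ ω : Ω, ‖x (t, ω)‖ ≤ M)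
    (xhat : ℝ → ℂ)
    (hstat : ∀ t τ : ℝ, (∫ ω : Ω, x (t, ω) * conj (x (t - τ, ω))) = xhat τ)
    (S : ℝ → ℂ) (hS : Integrable S)
    (hinv : ∀ τ : ℝ, xhat τ = ∫ ν : ℝ, S ν * Complex.exp (2 * (π : ℂ) * Complex.I * ν * τ))
    (w : ℝ → ℂ) (hw : Integrable w)
    (f : ℝ) :
    ((∫ ω : Ω, ‖∫ t : ℝ, w t * x (t, ω) *
        Complex.exp (-2 * (π : ℂ) * Complex.I * f * t)‖ ^ 2 : ℝ) : ℂ)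
      = ∫ f' : ℝ, S (f - f') *
          ((‖∫ t : ℝ, w t * Complex.exp (-2 * (π : ℂ) * Complex.I * f' * t)‖ ^ 2 : ℝ) : ℂ) := by
  set φ : ℝ → ℂ := fun t => w t * Complex.exp (-2 * (π : ℂ) * Complex.I * f * t)
  have hφ : Integrable φ :=
    hw.mul_bdd (c := 1) (Continuous.aestronglyMeasurable (by fun_prop))
      (.of_forall fun t => by simp [Complex.norm_exp])
  have hcov (t s : ℝ) : ∫ ω : Ω, x (t, ω) * conj (x (s, ω))
      = ∫ ν : ℝ, S ν * Complex.exp (2 * (π : ℂ) * Complex.I * ν * ((t - s : ℝ) : ℂ)) := by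
    rw [← hinv, ← hstat t (t - s), sub_sub_cancel]
  have hmod (ν t : ℝ) : φ t * Complex.exp (2 * (π : ℂ) * Complex.I * ν * t)
      = w t * Complex.exp (-2 * (π : ℂ) * Complex.I * ((f - ν : ℝ) : ℂ) * t) := by
    rw [mul_assoc, ← Complex.exp_add]; push_cast; ring_nf
  calc _ = ((∫ ω : Ω, ‖∫ t : ℝ, φ t * x (t, ω)‖ ^ 2 : ℝ) : ℂ) := by
        simp only [φ, mul_right_comm]
    _ = ∫ ν : ℝ, S ν * ((‖∫ t : ℝ, w t *
          Complex.exp (-2 * (π : ℂ) * Complex.I * ((f - ν : ℝ) : ℂ) * t)‖ ^ 2 : ℝ) : ℂ) := by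
      rw [integral_norm_integral_sq_eq_integral_covariance hxmeas hbd hφ]
      simp only [hcov, ← hmod]
      exact integral_mul_conj_mul_integral_exp_sub hφ hS
    _ = _ := by
      rw [← integral_sub_left_eq_self _ volume f]
      simp only [sub_sub_cancel]

/-- Wiener–Khinchin for windowed signals: if the bounded, jointly measurable,
second-order stationary process `x` has autocorrelation `x̂` given as the inverse Fourier
transform of an integrable power spectral density `S`, and `w` is an integrable window
with `|w|` square-integrable, then the expected energy spectral density of the windowed
signal `y(t) = w(t) x(t)` is the convolution of `S` with the energy spectral density
`|W|²` of the window: `E[|Y(f)|²] = ∫ S(f − f′) |W(f′)|² df′`. -/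
theorem expected_esd_eq_psd_conv_window_esd
    {Ω : Type*} [MeasureSpace Ω] [IsProbabilityMeasure (volume : Measure Ω)]
    (x : ℝ × Ω → ℂ) (M : ℝ) (hxmeas : Measurable x)
    (hbd : ∀ t : ℝ, ∀ᵐ ω : Ω, ‖x (t, ω)‖ ≤ M)
    (xhat : ℝ → ℂ)
    (hstat : ∀ t τ : ℝ, (∫ ω : Ω, x (t, ω) * conj (x (t - τ, ω))) = xhat τ)
    (S : ℝ → ℂ) (hS : Integrable S)
    (hinv : ∀ τ : ℝ, xhat τ = ∫ ν : ℝ, S ν * Complex.exp (2 * (π : ℂ) * Complex.I * ν * τ))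
    (w : ℝ → ℂ) (hw : Integrable w) (hw2 : Integrable (fun t : ℝ => ‖w t‖ ^ 2))
    (f : ℝ) :
    ((∫ ω : Ω, ‖∫ t : ℝ, w t * x (t, ω) *
        Complex.exp (-2 * (π : ℂ) * Complex.I * f * t)‖ ^ 2 : ℝ) : ℂ)
      = ∫ f' : ℝ, S (f - f') *
          ((‖∫ t : ℝ, w t * Complex.exp (-2 * (π : ℂ) * Complex.I * f' * t)‖ ^ 2 : ℝ) : ℂ) :=
  expected_esd_eq_psd_conv_window_esd_general x M hxmeas hbd xhat hstat S hS hinv w hw f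
end
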